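/- arXiv:2107.00729 — 7 statements merged into one kernel-verified Lean document; each statement's English description precedes it below -/
import Mathlib

section
/- If c : ZMod k → V (with k ≥ 1) is a directed cycle in the directed graph E and no vertex c i lies in N, then no vertex c i is provable, i.e. for all i : ZMod k, c i ∉ Provable(N). -/
/-- The set of provable vertices: every vertex in `N` is provable, and a vertex
all of whose in-neighbours are provable is provable. -/
inductive Provable {V : Type*} (E : V → V → Prop) (N : Set V) : V → Prop
  | base {v : V} : v ∈ N → Provable E N v
  | step {v : V} : (∀ u : V, E u v → Provable E N u) → Provable E N v

theorem cycle_disjoint_from_N_not_provable {V : Type*} (E : V → V → Prop) (N : Set V)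
    (k : ℕ) (hk : 1 ≤ k) (c : ZMod k → V)
    (hcyc : ∀ i : ZMod k, E (c i) (c (i + 1)))
    (hN : ∀ i : ZMod k, c i ∉ N) :
    ∀ i : ZMod k, ¬ Provable E N (c i) := by
  have key : ∀ v, Provable E N v → ∀ i : ZMod k, c i = v → False := by
    intro v hv
    induction hv with
    | base h => intro i hi; exact hN i (hi ▸ h)
    | step h ih =>
      intro i hi
      subst hi
      have he : E (c (i - 1)) (c i) := by
        have := hcyc (i - 1); simpa using this
      exact ih _ he (i - 1) rfl
  intro i hi
  exact key _ hi i rfl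
end

section
/- If every vertex of V is provable from N (Provable(N) = V), then every directed cycle of the directed graph E contains at least one vertex of N; that is, for every k ≥ 1 and every directed cycle c : ZMod k → V, there exists i : ZMod k with c i ∈ N. -/
theorem cycle_meets_N_of_all_provable {V : Type*} (E : V → V → Prop) (N : Set V)
    (hall : {v : V | Provable E N v} = Set.univ) :
    ∀ (k : ℕ), 1 ≤ k → ∀ c : ZMod k → V,
      (∀ i : ZMod k, E (c i) (c (i + 1))) → ∃ i : ZMod k, c i ∈ N := by
  intro k _ c hc
  have hp : Provable E N (c 0) := by
    have : c 0 ∈ {v : V | Provable E N v} := by rw [hall]; trivial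
    exact this
  have key : ∀ v, Provable E N v → ∀ i : ZMod k, v = c i → ∃ j : ZMod k, c j ∈ N := by
    intro v hv
    induction hv with
    | base h => intro i hi; exact ⟨i, hi ▸ h⟩
    | step h ih =>
      intro i hi
      have he : E (c (i - 1)) (c i) := by
        have := hc (i - 1); simpa using this
      exact ih (c (i - 1)) (hi ▸ he) (i - 1) rfl
  exact key (c 0) hp 0 rfl
end

section
/- Suppose c₁ : ZMod k₁ → V and c₂ : ZMod k₂ → V (with k₁, k₂ ≥ 1) are two directed cycles that overlap, i.e. they share at least one common vertex (∃ i j, c₁ i = c₂ j). If every vertex of V is provable from N, then each of the two cycles contains a vertex of N: there exist i with c₁ i ∈ N and j with c₂ j ∈ N. -/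
lemma cycle_meets_N {V : Type*} (E : V → V → Prop) (N : Set V) (k : ℕ)
    (c : ZMod k → V) (hcyc : ∀ i : ZMod k, E (c i) (c (i + 1)))
    {v : V} (hv : Provable E N v) : ∀ i : ZMod k, c i = v → ∃ j, c j ∈ N := by
  induction hv with
  | base h => exact fun i hi => ⟨i, hi ▸ h⟩
  | step h ih =>
    intro i hi
    have he : E (c (i - 1)) (c i) := by
      have := hcyc (i - 1); simpa using this
    exact ih (c (i - 1)) (hi ▸ he) (i - 1) rfl

theorem overlapping_cycles_each_meet_N {V : Type*} (E : V → V → Prop) (N : Set V)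
    (k₁ k₂ : ℕ) (hk₁ : 1 ≤ k₁) (hk₂ : 1 ≤ k₂)
    (c₁ : ZMod k₁ → V) (c₂ : ZMod k₂ → V)
    (hcyc₁ : ∀ i : ZMod k₁, E (c₁ i) (c₁ (i + 1)))
    (hcyc₂ : ∀ i : ZMod k₂, E (c₂ i) (c₂ (i + 1)))
    (hoverlap : ∃ (i : ZMod k₁) (j : ZMod k₂), c₁ i = c₂ j)
    (hall : {v : V | Provable E N v} = Set.univ) :
    (∃ i : ZMod k₁, c₁ i ∈ N) ∧ (∃ j : ZMod k₂, c₂ j ∈ N) := by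
  have hp : ∀ v : V, Provable E N v := fun v => by
    have : v ∈ {v : V | Provable E N v} := hall ▸ Set.mem_univ v
    exact this
  exact ⟨cycle_meets_N E N k₁ c₁ hcyc₁ (hp (c₁ 0)) 0 rfl,
         cycle_meets_N E N k₂ c₂ hcyc₂ (hp (c₂ 0)) 0 rfl⟩
end

section
/- Let c : ZMod k → V (with k ≥ 1) be a directed cycle such that for every i : ZMod k, every in-neighbour u of c i other than the cycle predecessor c (i-1) (i.e. every u with E u (c i) and u ≠ c (i-1)) is in Provable(N). If some vertex of the cycle lies in N (∃ j, c j ∈ N), then every vertex of the cycle is provable: for all i : ZMod k, c i ∈ Provable(N). -/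
theorem cycle_provable_of_mem_N {V : Type*} (E : V → V → Prop) (N : Set V)
    (k : ℕ) (hk : 1 ≤ k) (c : ZMod k → V)
    (hcyc : ∀ i : ZMod k, E (c i) (c (i + 1)))
    (hout : ∀ i : ZMod k, ∀ u : V, E u (c i) → u ≠ c (i - 1) → Provable E N u)
    (hN : ∃ j : ZMod k, c j ∈ N) :
    ∀ i : ZMod k, Provable E N (c i) := by
  obtain ⟨j, hj⟩ := hN
  have key : ∀ n : ℕ, Provable E N (c (j + n)) := by
    intro n
    induction n with
    | zero => simpa using Provable.base hj
    | succ n ih =>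
      apply Provable.step
      intro u hu
      by_cases h : u = c (j + (n + 1 : ℕ) - 1)
      · subst h
        have : (j + (n + 1 : ℕ) - 1 : ZMod k) = j + n := by push_cast; ring
        rw [this]; exact ih
      · exact hout _ u hu h
  intro i
  haveI : NeZero k := ⟨by omega⟩
  have : i = j + ((i - j).val : ZMod k) := by
    rw [ZMod.natCast_val, ZMod.cast_id]; ring
  rw [this]
  exact key _
end

section
/- Assume V is a finite type. If N intersects every directed cycle of the directed graph E (for every k ≥ 1 and every directed cycle c : ZMod k → V there exists i with c i ∈ N), then every vertex of V is provable from N: Provable(N) = V. -/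
theorem all_provable_of_N_covers_cycles {V : Type*} [Fintype V] (E : V → V → Prop) (N : Set V)
    (hcover : ∀ (k : ℕ), 1 ≤ k → ∀ c : ZMod k → V,
      (∀ i : ZMod k, E (c i) (c (i + 1))) → ∃ i : ZMod k, c i ∈ N) :
    {v : V | Provable E N v} = Set.univ := by
  ext v
  simp only [Set.mem_setOf_eq, Set.mem_univ, iff_true]
  by_contra hv
  have key : ∀ w : V, ¬ Provable E N w → ∃ u, E u w ∧ ¬ Provable E N u := by
    intro w hw
    by_contra hc
    push_neg at hc
    exact hw (Provable.step hc)
  choose f hfE hfP using key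
  let g : ℕ → {w : V // ¬ Provable E N w} := fun n =>
    Nat.rec ⟨v, hv⟩ (fun _ p => ⟨f p.1 p.2, hfP p.1 p.2⟩) n
  have hg : ∀ n : ℕ, E (g (n + 1)).1 (g n).1 := fun n => hfE _ _
  have : ∃ a b : ℕ, a ≠ b ∧ (g a).1 = (g b).1 :=
    Finite.exists_ne_map_eq_of_infinite fun n => (g n).1
  obtain ⟨a, b, hab, heq⟩ := this
  -- wlog m < n
  obtain ⟨m, n, hmn, hgmn⟩ : ∃ m n : ℕ, m < n ∧ (g m).1 = (g n).1 := by
    rcases lt_or_gt_of_ne hab with h | h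
    · exact ⟨a, b, h, heq⟩
    · exact ⟨b, a, h, heq.symm⟩
  set k := n - m with hk
  have hk1 : 1 ≤ k := by omega
  haveI : NeZero k := ⟨by omega⟩
  set c : ZMod k → V := fun i => (g (n - i.val)).1 with hc
  have hcyc : ∀ i : ZMod k, E (c i) (c (i + 1)) := by
    intro i
    have hjk : i.val < k := ZMod.val_lt i
    have hval : (i + 1).val = (i.val + 1) % k := by
      rw [ZMod.val_add, ZMod.val_one_eq_one_mod, Nat.add_mod_mod]
    by_cases h : i.val + 1 < k
    · have h2 : (i + 1).val = i.val + 1 := by rw [hval]; exact Nat.mod_eq_of_lt h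
      have h3 : n - i.val = (n - (i.val + 1)) + 1 := by omega
      simp only [hc, h2, h3]
      exact hg _
    · have hik : i.val + 1 = k := by omega
      have h2 : (i + 1).val = 0 := by rw [hval, hik, Nat.mod_self]
      have h3 : n - i.val = m + 1 := by omega
      simp only [hc, h2, h3, Nat.sub_zero, ← hgmn]
      exact hg m
  obtain ⟨i, hi⟩ := hcover k hk1 c hcyc
  exact (g (n - i.val)).2 (Provable.base hi)
end

section
/- Assume V is a finite type. Then every vertex of V is provable from N (Provable(N) = V) if and only if N contains at least one vertex of every directed cycle of E (for every k ≥ 1 and every directed cycle c : ZMod k → V there exists i with c i ∈ N). -/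
theorem all_provable_iff_N_covers_cycles {V : Type*} [Fintype V] (E : V → V → Prop) (N : Set V) :
    {v : V | Provable E N v} = Set.univ ↔
      ∀ (k : ℕ), 1 ≤ k → ∀ c : ZMod k → V,
        (∀ i : ZMod k, E (c i) (c (i + 1))) → ∃ i : ZMod k, c i ∈ N := by
  constructor
  · intro hall k hk c hc
    haveI : NeZero k := ⟨by omega⟩
    by_contra hno
    push_neg at hno
    have key : ∀ v, Provable E N v → ∀ i : ZMod k, v ≠ c i := by
      intro v hv
      induction hv with
      | base hvN => intro i hvi; exact hno i (hvi ▸ hvN)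
      | step h ih =>
        intro i hvi
        exact ih (c (i - 1)) (by rw [hvi]; simpa using hc (i - 1)) (i - 1) rfl
    have hm : c 0 ∈ {v : V | Provable E N v} := hall ▸ Set.mem_univ (c 0)
    exact key (c 0) hm 0 rfl
  · intro hcov
    by_contra hne
    have hex : ∃ v, ¬ Provable E N v := by
      by_contra h
      push_neg at h
      exact hne (Set.eq_univ_of_forall fun v => h v)
    obtain ⟨v0, hv0⟩ := hex
    have key : ∀ v : {v : V // ¬ Provable E N v},
        ∃ u : {v : V // ¬ Provable E N v}, E u.1 v.1 := by
      rintro ⟨v, hv⟩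
      by_contra h
      push_neg at h
      exact hv (Provable.step fun u hu => by
        by_contra hu'
        exact h ⟨u, hu'⟩ hu)
    choose g hg using key
    set f : ℕ → {v : V // ¬ Provable E N v} := fun n => g^[n] ⟨v0, hv0⟩ with hf
    have hE : ∀ n, E (f (n + 1)).1 (f n).1 := by
      intro n
      have h1 : f (n + 1) = g (f n) := Function.iterate_succ_apply' g n _
      rw [h1]
      exact hg (f n)
    obtain ⟨a, b, hab, heq⟩ := Finite.exists_ne_map_eq_of_infinite f
    wlog hlt : a < b generalizing a b
    · exact this b a hab.symm heq.symm (by omega)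
    set k := b - a with hkdef
    have hk : 1 ≤ k := by omega
    haveI : NeZero k := ⟨by omega⟩
    set c : ZMod k → V := fun i => (f (b - i.val)).1 with hcdef
    have hedge : ∀ i : ZMod k, E (c i) (c (i + 1)) := by
      intro i
      have hiv : i.val < k := ZMod.val_lt i
      have hadd : (i + 1).val = (i.val + 1) % k := by
        rw [Nat.add_mod i.val 1 k, Nat.mod_eq_of_lt hiv, ZMod.val_add,
          ZMod.val_one_eq_one_mod]
      rcases Nat.lt_or_ge (i.val + 1) k with h1 | h1
      · have hv1 : (i + 1).val = i.val + 1 := by rw [hadd, Nat.mod_eq_of_lt h1]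
        show E (f (b - i.val)).1 (f (b - (i + 1).val)).1
        rw [hv1]
        have hb : b - i.val = (b - (i.val + 1)) + 1 := by omega
        rw [hb]
        exact hE _
      · have hik : i.val + 1 = k := by omega
        have hv1 : (i + 1).val = 0 := by rw [hadd, hik, Nat.mod_self]
        show E (f (b - i.val)).1 (f (b - (i + 1).val)).1
        rw [hv1]
        have hb1 : b - i.val = a + 1 := by omega
        have hb2 : b - 0 = b := by omega
        rw [hb1, hb2, ← heq]
        exact hE a
    obtain ⟨i, hi⟩ := hcov k hk c hedge
    exact (f (b - i.val)).2 (Provable.base hi)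
end

section
/- Assume V is a finite type. Then every vertex of V is provable from N (Provable(N) = V) if and only if the directed graph E restricted to the complement of N is acyclic, i.e. there is no k ≥ 1 and no directed cycle c : ZMod k → V with c i ∉ N for all i. -/
theorem all_provable_iff_no_cycle_avoiding_N {V : Type*} [Fintype V]
    (E : V → V → Prop) (N : Set V) :
    {v : V | Provable E N v} = Set.univ ↔
      ¬ ∃ (k : ℕ), 1 ≤ k ∧ ∃ c : ZMod k → V,
        (∀ i : ZMod k, E (c i) (c (i + 1))) ∧ ∀ i : ZMod k, c i ∉ N := by
  constructor
  · rintro h ⟨k, hk, c, hE, hN⟩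
    haveI : NeZero k := ⟨by omega⟩
    have key : ∀ v, Provable E N v → ∀ i : ZMod k, v ≠ c i := by
      intro v hv
      induction hv with
      | base h => intro i hvi; exact hN i (hvi ▸ h)
      | @step v h ih =>
        intro i hvi
        have he : E (c (i - 1)) v := by
          have := hE (i - 1); rwa [sub_add_cancel, ← hvi] at this
        exact ih (c (i - 1)) he (i - 1) rfl
    have hall : Provable E N (c 0) := by
      have := Set.eq_univ_iff_forall.mp h (c 0); exact this
    exact key (c 0) hall 0 rfl
  · intro hnc
    by_contra hne
    obtain ⟨v0, hv0⟩ := (Set.ne_univ_iff_exists_notMem _).mp hne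
    have key : ∀ x : {v : V // ¬ Provable E N v},
        ∃ y : {v : V // ¬ Provable E N v}, E y.1 x.1 := by
      rintro ⟨v, hv⟩
      by_contra hcon
      push_neg at hcon
      exact hv (Provable.step fun u hu => by
        by_contra hu'; exact hcon ⟨u, hu'⟩ hu)
    choose g hg using key
    set x0 : {v : V // ¬ Provable E N v} := ⟨v0, hv0⟩ with hx0
    set f : ℕ → {v : V // ¬ Provable E N v} := fun n => g^[n] x0 with hf
    have hedge : ∀ n : ℕ, E (f (n + 1)).1 (f n).1 := by
      intro n
      have : f (n + 1) = g (f n) := Function.iterate_succ_apply' g n x0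
      rw [this]; exact hg (f n)
    obtain ⟨a, b, hab, heq⟩ := Finite.exists_ne_map_eq_of_infinite f
    wlog hlt : a < b generalizing a b
    · exact this b a hab.symm heq.symm (by omega)
    set k : ℕ := b - a with hkdef
    have hk : 1 ≤ k := by omega
    haveI : NeZero k := ⟨by omega⟩
    apply hnc
    refine ⟨k, hk, fun i => (f (b - i.val)).1, ?_, ?_⟩
    · intro i
      have hm : i.val < k := ZMod.val_lt i
      have hval : (i + 1).val = (i.val + 1) % k := by
        rw [ZMod.val_add, ZMod.val_one_eq_one_mod]
        conv_rhs => rw [Nat.add_mod]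
        rw [Nat.mod_eq_of_lt hm]
      have hkb : k ≤ b := by omega
      show E (f (b - i.val)).1 (f (b - (i + 1).val)).1
      rcases Nat.lt_or_ge (i.val + 1) k with h1 | h1
      · have hv2 : b - (i + 1).val = b - i.val - 1 := by
          rw [hval, Nat.mod_eq_of_lt h1]; omega
        rw [hv2]
        have hn : b - i.val - 1 + 1 = b - i.val := by omega
        have := hedge (b - i.val - 1); rwa [hn] at this
      · have hik : i.val + 1 = k := by omega
        have hv2 : (i + 1).val = 0 := by rw [hval, hik, Nat.mod_self]
        rw [hv2, Nat.sub_zero, ← heq]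
        have ha : a = b - i.val - 1 := by omega
        rw [ha]
        have hn : b - i.val - 1 + 1 = b - i.val := by omega
        have := hedge (b - i.val - 1); rwa [hn] at this
    · intro i
      have := (f (b - i.val)).2
      intro hmem
      exact this (Provable.base hmem)
end
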